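/- For the bump allocator, the null address is never client-accessible after any feasible allocation sequence: null ∉ addrs(Φ₁) ∪ R. -/

import Mathlib

inductive SymbEvent : Type
  | malloc (k : ℕ)
  | mfail (k : ℕ)
  | free (z : ℕ)
deriving DecidableEq

/-- Auxiliary: freeIndex on the reversed sequence. -/
def freeIndexRev : List SymbEvent → ℕ → Option ℕ
  | [], _ => none
  | SymbEvent.malloc _ :: rest, 0 => some (rest.length + 1)
  | SymbEvent.malloc _ :: rest, z + 1 => freeIndexRev rest z
  | SymbEvent.mfail _ :: rest, z => freeIndexRev rest z
  | SymbEvent.free _ :: rest, z => freeIndexRev rest z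

/-- `freeIndex σ z`: 1-based index of the `z`-th successful malloc counting backwards. -/
def freeIndex (σ : List SymbEvent) (z : ℕ) : Option ℕ := freeIndexRev σ.reverse z

/-- `MallocFreeRel σ i j`: the free event at (1-based) position `j` corresponds to
the malloc at position `i`. -/
def MallocFreeRel (σ : List SymbEvent) (i j : ℕ) : Prop :=
  (∃ k, σ[i - 1]? = some (SymbEvent.malloc k)) ∧
  ∃ z, σ[j - 1]? = some (SymbEvent.free z) ∧ freeIndex (σ.take (j - 1)) z = some i

/-- Well-formedness of a symbolic allocation sequence: every free event has a
matching malloc, and no malloc is matched by two different frees. -/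
def WellFormedSeq (σ : List SymbEvent) : Prop :=
  (∀ j z, σ[j - 1]? = some (SymbEvent.free z) → ∃ i, MallocFreeRel σ i j) ∧
  (∀ i j j', MallocFreeRel σ i j → MallocFreeRel σ i j' → j = j')

/-- A heap: a partial function from addresses to integer values. -/
abbrev Heap := ℕ → Option ℤ

/-- Allocation map: set of triples (address, size, index-in-sequence). -/
abbrev AllocMap := Set (ℕ × ℕ × ℕ)

/-- Addresses covered by an allocation map. -/
def addrsOf (Φ : AllocMap) : Set ℕ :=
  {x | ∃ p ∈ Φ, p.1 ≤ x ∧ x < p.1 + p.2.1}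

/-- An allocation strategy with allocator-state type `A`. -/
structure Strategy (A : Type) where
  null : ℕ
  init : Heap → Heap × A
  malloc : Heap → A → ℕ → Heap × A × ℕ
  free : Heap → A → ℕ → Heap × A

/-- Step feasibility (play relation). -/
inductive Step {A : Type} (α : Strategy A) :
    AllocMap → Heap → A → List SymbEvent → SymbEvent → Heap → A → AllocMap → Prop
  | mallocOk {Φ : AllocMap} {H : Heap} {st : A} {σ : List SymbEvent}
      {k : ℕ} {H' : Heap} {st' : A} {a : ℕ} :
      α.malloc H st k = (H', st', a) → a ≠ α.null →
      Step α Φ H st σ (SymbEvent.malloc k) H' st' (Φ ∪ {(a, k, σ.length + 1)})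
  | mallocFail {Φ : AllocMap} {H : Heap} {st : A} {σ : List SymbEvent}
      {k : ℕ} {H' : Heap} {st' : A} {a : ℕ} :
      α.malloc H st k = (H', st', a) → a = α.null →
      Step α Φ H st σ (SymbEvent.mfail k) H' st' Φ
  | free {Φ : AllocMap} {H : Heap} {st : A} {σ : List SymbEvent}
      {z i k a : ℕ} {H' : Heap} {st' : A} :
      MallocFreeRel (σ ++ [SymbEvent.free z]) i (σ.length + 1) →
      (σ ++ [SymbEvent.free z])[i - 1]? = some (SymbEvent.malloc k) →
      (a, k, i) ∈ Φ →
      α.free H st a = (H', st') →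
      Step α Φ H st σ (SymbEvent.free z) H' st' (Φ \ {(a, k, i)})

/-- Sequence feasibility (fast-forward relation), interleaving arbitrary client
updates to client-accessible memory `addrsOf Φ ∪ R` with allocator steps. -/
inductive FF {A : Type} (α : Strategy A) (R : Set ℕ) :
    AllocMap → Heap → A → List SymbEvent → Heap → A → AllocMap → Prop
  | empty {Φ : AllocMap} {H : Heap} {st : A} : FF α R Φ H st [] H st Φ
  | step {Φ : AllocMap} {H : Heap} {st : A} {σ : List SymbEvent}
      {H' : Heap} {st' : A} {Φ' : AllocMap} {Hu : Heap} {e : SymbEvent}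
      {H'' : Heap} {st'' : A} {Φ'' : AllocMap} :
      FF α R Φ H st σ H' st' Φ' →
      (∀ a ∉ addrsOf Φ' ∪ R, Hu a = H' a) →
      Step α Φ' Hu st' σ e H'' st'' Φ'' →
      FF α R Φ H st (σ ++ [e]) H'' st'' Φ''

/-- The bump allocator on the memory segment `[N₁,N₃)` with reserved `[N₁,N₂)`;
its state is the bump pointer. -/
def bump (N₁ N₂ N₃ : ℕ) : Strategy ℕ where
  null := N₂
  init H := ((fun i => if i = N₂ then none
      else if H i = none ∧ N₂ + 1 ≤ i ∧ i < N₃ then some 0 else H i), N₂ + 1)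
  malloc H p s :=
    if 0 < s ∧ p + s ≤ N₃ then (H, p + s, p)
    else if s = 0 ∧ p + 1 ≤ N₃ then (H, p + 1, p)
    else (H, p, N₂)
  free H p _ := (H, p)

/-! The bump pointer starts just above null, never decreases, and each block is handed out at the
current pointer, so every allocated address exceeds null; and null lies outside `R = [N₁, N₂)`. -/

def BumpInvariant (N₂ p : ℕ) (Φ : AllocMap) : Prop :=
  N₂ < p ∧ ∀ b ∈ Φ, N₂ < b.1

lemma bump_malloc_cases {N₁ N₂ N₃ p s : ℕ} {H H' : Heap} {p' a : ℕ}
    (h : (bump N₁ N₂ N₃).malloc H p s = (H', p', a)) :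
    (a = p ∧ p < p') ∨ (a = N₂ ∧ p' = p) := by
  simp only [bump] at h
  split_ifs at h <;> simp only [Prod.mk.injEq] at h <;> omega

lemma Step.bumpInvariant {N₁ N₂ N₃ : ℕ} {Φ Φ' : AllocMap} {H H' : Heap} {p p' : ℕ}
    {σ : List SymbEvent} {e : SymbEvent}
    (hstep : Step (bump N₁ N₂ N₃) Φ H p σ e H' p' Φ') (hinv : BumpInvariant N₂ p Φ) :
    BumpInvariant N₂ p' Φ' := by
  obtain ⟨hp, hΦ⟩ := hinv
  cases hstep with
  | mallocOk hm hne =>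
    obtain ⟨rfl, hlt⟩ | ⟨rfl, -⟩ := bump_malloc_cases hm
    · refine ⟨hp.trans hlt, ?_⟩
      rintro b (hb | rfl)
      exacts [hΦ b hb, hp]
    · exact absurd rfl hne
  | mallocFail hm hnull =>
    obtain ⟨rfl, -⟩ | ⟨-, rfl⟩ := bump_malloc_cases hm
    · exact absurd hnull hp.ne'
    · exact ⟨hp, hΦ⟩
  | free _ _ _ hf =>
    obtain ⟨-, rfl⟩ := Prod.mk.inj hf
    exact ⟨hp, fun b hb => hΦ b hb.1⟩

lemma FF.bumpInvariant {N₁ N₂ N₃ : ℕ} {R : Set ℕ} {Φ Φ' : AllocMap} {H H' : Heap} {p p' : ℕ}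
    {σ : List SymbEvent} (hff : FF (bump N₁ N₂ N₃) R Φ H p σ H' p' Φ')
    (hinv : BumpInvariant N₂ p Φ) : BumpInvariant N₂ p' Φ' := by
  induction hff with
  | empty => exact hinv
  | step _ _ hstep ih => exact hstep.bumpInvariant ih

lemma notMem_addrsOf_of_lt {Φ : AllocMap} {x : ℕ} (h : ∀ b ∈ Φ, x < b.1) : x ∉ addrsOf Φ :=
  fun ⟨b, hb, hle, _⟩ => (h b hb).not_ge hle

theorem bump_null_not_accessible_general (N₁ N₂ N₃ : ℕ)
    (H₀ H₁ : Heap) (A₁ : ℕ) (Φ₁ : AllocMap) (σ : List SymbEvent)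
    (R : Set ℕ) (hR : R = Set.Ico N₁ N₂)
    (hff : FF (bump N₁ N₂ N₃) R ∅ H₀ (N₂ + 1) σ H₁ A₁ Φ₁) :
    (bump N₁ N₂ N₃).null ∉ addrsOf Φ₁ ∪ R := by
  have hinv : BumpInvariant N₂ A₁ Φ₁ := hff.bumpInvariant ⟨N₂.lt_succ_self, by simp⟩
  rintro (hΦ | hRmem)
  · exact notMem_addrsOf_of_lt hinv.2 hΦ
  · rw [hR] at hRmem
    exact hRmem.2.false

theorem bump_null_not_accessible (N₁ N₂ N₃ : ℕ)
    (H H₀ H₁ : Heap) (A₁ : ℕ) (Φ₁ : AllocMap) (σ : List SymbEvent)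
    (R : Set ℕ) (hR : R = Set.Ico N₁ N₂)
    (hdom : R ⊆ {a | H a ≠ none})
    (hinit : (bump N₁ N₂ N₃).init H = (H₀, N₂ + 1))
    (hff : FF (bump N₁ N₂ N₃) R ∅ H₀ (N₂ + 1) σ H₁ A₁ Φ₁) :
    (bump N₁ N₂ N₃).null ∉ addrsOf Φ₁ ∪ R :=
  bump_null_not_accessible_general N₁ N₂ N₃ H₀ H₁ A₁ Φ₁ σ R hR hff
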